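/- There exists a constant c > 0 depending only on d such that: for every 0 < γ < 1, every φ ∈ (0, 1], and every (2, φ)-clusterable graph G on n vertices with maximum degree at most d, there is a subset V' ⊆ V with |V'| ≥ (1 − γ)n such that for every u ∈ V' and every integer t > c·(log n)/φ², the endpoint distribution of the length-t lazy random walk from u satisfies ‖p_u^t‖² ≤ 4/(γn). -/

import Mathlib

open scoped RealInnerProductSpace

open scoped Classical in
/-- The lazy random walk matrix of a graph `G` with degree parameter `d`. -/
noncomputable def lazyWalk {n : ℕ} (G : SimpleGraph (Fin n)) (d : ℕ) :
    Matrix (Fin n) (Fin n) ℝ :=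
  Matrix.of fun u v =>
    if u = v then 1 - ((G.neighborSet u).ncard : ℝ) / (2 * d)
    else if G.Adj u v then 1 / (2 * d) else 0

/-- `G` has maximum degree at most `d`. -/
def MaxDegreeLE {n : ℕ} (G : SimpleGraph (Fin n)) (d : ℕ) : Prop :=
  ∀ v, (G.neighborSet v).ncard ≤ d

/-- `p_u^t`: the endpoint distribution of a length-`t` lazy random walk from `u`. -/
noncomputable def pvec {n : ℕ} (G : SimpleGraph (Fin n)) (d t : ℕ) (u : Fin n) :
    EuclideanSpace ℝ (Fin n) :=
  WithLp.toLp 2 fun v => ((lazyWalk G d ^ t).mulVec fun w => if w = u then 1 else 0) v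

/-- `q_u^t = p_u^t - (1/n) 𝟙`. -/
noncomputable def qvec {n : ℕ} (G : SimpleGraph (Fin n)) (d t : ℕ) (u : Fin n) :
    EuclideanSpace ℝ (Fin n) :=
  WithLp.toLp 2 fun v => pvec G d t u v - 1 / n

/-- `q_u^0 = 1_u - (1/n) 𝟙`. -/
noncomputable def qzero {n : ℕ} (u : Fin n) : EuclideanSpace ℝ (Fin n) :=
  WithLp.toLp 2 fun v => (if v = u then 1 else 0) - 1 / n

/-- average of `q_u^0` over `u ∈ S`. -/
noncomputable def qavg {n : ℕ} (S : Finset (Fin n)) : EuclideanSpace ℝ (Fin n) :=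
  (S.card : ℝ)⁻¹ • ∑ u ∈ S, qzero u

/-- `a` and `b` are `ε`-close to collinear. -/
def CloseCollinear {E : Type*} [NormedAddCommGroup E] [NormedSpace ℝ E]
    (ε : ℝ) (a b : E) : Prop :=
  ∃ (ea eb w : E) (s s' : ℝ),
    ‖ea‖ ≤ ε ∧ ‖eb‖ ≤ ε ∧ a + ea = s • w ∧ b + eb = s' • w

/-- `a` and `b` are `ε`-close to antipodal. -/
def CloseAntipodal {E : Type*} [NormedAddCommGroup E] [NormedSpace ℝ E]
    (ε : ℝ) (a b : E) : Prop :=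
  ∃ (ea eb w : E) (s s' : ℝ), 0 ≤ s ∧ 0 ≤ s' ∧
    ‖ea‖ ≤ ε ∧ ‖eb‖ ≤ ε ∧ a + ea = s • w ∧ b + eb = -(s' • w)

/-- `a` and `b` are `ε`-close to podal. -/
def ClosePodal {E : Type*} [NormedAddCommGroup E] [NormedSpace ℝ E]
    (ε : ℝ) (a b : E) : Prop :=
  ∃ (ea eb w : E) (s s' : ℝ), 0 ≤ s ∧ 0 ≤ s' ∧
    ‖ea‖ ≤ ε ∧ ‖eb‖ ≤ ε ∧ a + ea = s • w ∧ b + eb = s' • w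

/-- The Gram matrix `A_{u,v}` of two vectors. -/
noncomputable def gram2 {n : ℕ} (a b : EuclideanSpace ℝ (Fin n)) :
    Matrix (Fin 2) (Fin 2) ℝ :=
  !![‖a‖ ^ 2, ⟪a, b⟫; ⟪b, a⟫, ‖b‖ ^ 2]

/-- Number of edges of `G` between `S` and `C \ S` (for `S ⊆ C`). -/
noncomputable def cutEdgesIn {n : ℕ} (G : SimpleGraph (Fin n)) (C S : Finset (Fin n)) : ℕ :=
  {p : Fin n × Fin n | p.1 ∈ S ∧ p.2 ∈ C ∧ p.2 ∉ S ∧ G.Adj p.1 p.2}.ncard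

/-- Number of edges of `G` between `S` and its complement. -/
noncomputable def cutEdges {n : ℕ} (G : SimpleGraph (Fin n)) (S : Finset (Fin n)) : ℕ :=
  cutEdgesIn G Finset.univ S

/-- The cut conductance `φ_G(S) = e(S, V∖S) / (d|S|)`. -/
noncomputable def cutCond {n : ℕ} (G : SimpleGraph (Fin n)) (d : ℕ) (S : Finset (Fin n)) : ℝ :=
  (cutEdges G S : ℝ) / (d * S.card)

/-- The (inner) conductance of the induced subgraph `G[C]` is at least `φ`. -/
def InnerConductanceGE {n : ℕ} (G : SimpleGraph (Fin n)) (d : ℕ) (C : Finset (Fin n))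
    (φ : ℝ) : Prop :=
  ∀ S ⊆ C, S.Nonempty → 2 * S.card ≤ C.card →
    φ ≤ (cutEdgesIn G C S : ℝ) / (d * S.card)

/-- `G` is `(2, φ)`-clusterable. -/
def Clusterable2 {n : ℕ} (G : SimpleGraph (Fin n)) (d : ℕ) (φ : ℝ) : Prop :=
  InnerConductanceGE G d Finset.univ φ ∨
  ∃ C₁ C₂ : Finset (Fin n), C₁.Nonempty ∧ C₂.Nonempty ∧ Disjoint C₁ C₂ ∧
    C₁ ∪ C₂ = Finset.univ ∧ InnerConductanceGE G d C₁ φ ∧ InnerConductanceGE G d C₂ φ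

/-- `G` is `ε`-far from `(2, φ)`-clusterable. -/
def FarFromClusterable2 {n : ℕ} (G : SimpleGraph (Fin n)) (d : ℕ) (ε φ : ℝ) : Prop :=
  ∀ G' : SimpleGraph (Fin n), MaxDegreeLE G' d →
    ((symmDiff G.edgeSet G'.edgeSet).ncard : ℝ) ≤ ε * d * n →
    ¬ Clusterable2 G' d φ

/-- The span of the eigenvectors of `M` with eigenvalue greater than `c`. -/
noncomputable def heavySpace {n : ℕ} (M : Matrix (Fin n) (Fin n) ℝ) (c : ℝ) :
    Submodule ℝ (EuclideanSpace ℝ (Fin n)) :=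
  ⨆ μ : {μ : ℝ // c < μ}, Module.End.eigenspace (Matrix.toEuclideanLin M) (μ : ℝ)

/-- Orthogonal projection onto the span of the eigenvectors of `M` with eigenvalue
greater than `c`. -/
noncomputable def heavyProj {n : ℕ} (M : Matrix (Fin n) (Fin n) ℝ) (c : ℝ)
    (x : EuclideanSpace ℝ (Fin n)) : EuclideanSpace ℝ (Fin n) :=
  (Submodule.orthogonalProjection (heavySpace M c) x : EuclideanSpace ℝ (Fin n))


/-!
The lazy walk matrix is `M = 1 - L / (2d)` for the Laplacian `L`, so its eigenvalues `λᵢ` lie in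
`[0, 1]` and `∑ᵤ ‖p_u^t‖² = tr M^{2t} = ∑ᵢ λᵢ^{2t}`. On a cluster `C` of inner conductance `φ`,
a co-area argument over the level sets of a function, followed by a split at its median, gives the
Poincaré inequality `∑_{u ~ v in C} (x u - x v)² ≥ φ² d ∑_{u ∈ C} (x u)²` whenever `x` sums to zero
on `C`. Hence `⟪x, M x⟫ ≤ (1 - φ²/4) ‖x‖²` for every `x` summing to zero on both clusters, a
subspace of codimension at most two, so at most two eigenvalues exceed `1 - φ²/4`. For
`t ≥ 2 log n / φ²` this bounds the trace by `2 + n (1 - φ²/4)^{2t} ≤ 3`, and Markov's inequality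
leaves at most `3γn/4` vertices with `‖p_u^t‖² > 4/(γn)`; finally `‖p_u^t‖` is non-increasing in
`t`.
-/

open Finset Matrix
open scoped Classical

theorem Finset.exists_median {α β : Type*} [LinearOrder β] (C : Finset α) (hC : C.Nonempty)
    (x : α → β) :
    ∃ m, 2 * #{u ∈ C | m < x u} ≤ #C ∧ 2 * #{u ∈ C | x u < m} ≤ #C := by
  -- the median is the least value `s` of `x` on `C` with `x ≤ s` on at least half of `C`
  set T := (C.image x).filter fun s => #C ≤ 2 * #{u ∈ C | x u ≤ s}
  have hT : T.Nonempty := by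
    refine ⟨(C.image x).max' (hC.image x), mem_filter.2 ⟨max'_mem _ _, ?_⟩⟩
    rw [filter_true_of_mem fun u hu => le_max' _ _ (mem_image_of_mem x hu)]
    omega
  refine ⟨T.min' hT, ?_, ?_⟩
  · have hle := (mem_filter.1 (T.min'_mem hT)).2
    have hsplit := card_filter_add_card_filter_not (s := C) (fun u => x u ≤ T.min' hT)
    simp only [not_le] at hsplit
    omega
  · by_contra! hlt
    have hne : ({u ∈ C | x u < T.min' hT} : Finset α).Nonempty := by
      rw [← card_pos]; omega
    set s := ({u ∈ C | x u < T.min' hT}.image x).max' (hne.image x)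
    have hs : s ∈ {u ∈ C | x u < T.min' hT}.image x := max'_mem _ _
    obtain ⟨w, hw, hws⟩ := mem_image.1 hs
    have hsub : {u ∈ C | x u < T.min' hT} ⊆ {u ∈ C | x u ≤ s} := fun u hu =>
      mem_filter.2 ⟨(mem_filter.1 hu).1, le_max' _ _ (mem_image_of_mem x hu)⟩
    have hsT : s ∈ T := mem_filter.2
      ⟨mem_image.2 ⟨w, (mem_filter.1 hw).1, hws⟩, by have := card_le_card hsub; omega⟩
    exact absurd (T.min'_le s hsT) (not_le.2 (hws ▸ (mem_filter.1 hw).2 : s < T.min' hT))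

theorem abs_sub_eq_abs_max_sub_max_add_abs_min_sub_min (a b m : ℝ) :
    |a - b| = |max a m - max b m| + |min a m - min b m| := by
  rcases le_total a m with ha | ha <;> rcases le_total b m with hb | hb <;>
    simp only [max_eq_left, max_eq_right, min_eq_left, min_eq_right, ha, hb, sub_self,
      abs_zero, add_zero, zero_add] <;>
    rcases le_total a b with hab | hab <;>
    simp only [abs_of_nonneg, abs_of_nonpos, sub_nonneg, sub_nonpos, hab, ha, hb] <;>
    linarith

theorem sq_max_sub_max_add_sq_max_sub_max_le (a b m : ℝ) :
    (max (a - m) 0 - max (b - m) 0) ^ 2 + (max (m - a) 0 - max (m - b) 0) ^ 2 ≤ (a - b) ^ 2 := by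
  rcases le_total a m with ha | ha <;> rcases le_total b m with hb | hb <;>
    simp only [max_eq_left, max_eq_right, sub_nonneg, sub_nonpos, ha, hb] <;>
    nlinarith

theorem sum_pow_le_card_add_mul {ι : Type*} [Fintype ι] {μ : ι → ℝ} (hμ : ∀ i, μ i ∈ Set.Icc 0 1)
    {c : ℝ} (hc : 0 ≤ c) (k : ℕ) :
    ∑ i, μ i ^ k ≤ #{i | c < μ i} + Fintype.card ι * c ^ k := by
  calc ∑ i, μ i ^ k ≤ ∑ i, ((if c < μ i then 1 else 0) + c ^ k) := by
        refine sum_le_sum fun i _ => ?_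
        by_cases hi : c < μ i
        · simp only [hi, if_true]
          linarith [pow_le_one₀ (hμ i).1 (hμ i).2 (n := k), pow_nonneg hc k]
        · simp only [hi, if_false, zero_add]
          exact pow_le_pow_left₀ (hμ i).1 (not_lt.1 hi) k
    _ = #{i | c < μ i} + Fintype.card ι * c ^ k := by
        rw [sum_add_distrib, sum_boole, sum_const, card_univ, nsmul_eq_mul]

theorem natCast_mul_one_sub_pow_le_one (n : ℕ) {δ : ℝ} (hδ : δ ≤ 1) {k : ℕ}
    (hk : Real.log n ≤ δ * k) : n * (1 - δ) ^ k ≤ 1 := by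
  rcases n.eq_zero_or_pos with rfl | hn
  · simp
  have hn' : (0 : ℝ) < n := by exact_mod_cast hn
  calc n * (1 - δ) ^ k ≤ n * Real.exp (-δ) ^ k :=
        mul_le_mul_of_nonneg_left
          (pow_le_pow_left₀ (by linarith) (by linarith [Real.add_one_le_exp (-δ)]) k) hn'.le
    _ = n * Real.exp (-(δ * k)) := by rw [← Real.exp_nat_mul]; ring_nf
    _ ≤ n * Real.exp (-Real.log n) := by gcongr
    _ = 1 := by rw [Real.exp_neg, Real.exp_log hn', mul_inv_cancel₀ hn'.ne']

theorem card_sub_div_le_card_filter_le {ι : Type*} [Fintype ι] {f : ι → ℝ} (hf : ∀ i, 0 ≤ f i)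
    {a A : ℝ} (ha : 0 < a) (hA : ∑ i, f i ≤ A) : Fintype.card ι - A / a ≤ #{i | f i ≤ a} := by
  have hmarkov : #{i | a < f i} * a ≤ A :=
    calc #{i | a < f i} * a = ∑ i with a < f i, a := by rw [sum_const, nsmul_eq_mul]
      _ ≤ ∑ i with a < f i, f i := sum_le_sum fun i hi => (mem_filter.1 hi).2.le
      _ ≤ ∑ i, f i := sum_le_sum_of_subset_of_nonneg (filter_subset _ _) fun i _ _ => hf i
      _ ≤ A := hA
  have hsplit := card_filter_add_card_filter_not (s := univ) fun i => f i ≤ a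
  simp only [not_le, card_univ] at hsplit
  rw [← hsplit, Nat.cast_add]
  linarith [(le_div_iff₀ ha).2 hmarkov]

namespace Matrix.IsHermitian

variable {ι : Type*} [Fintype ι] [DecidableEq ι] {M : Matrix ι ι ℝ} (hM : M.IsHermitian)

theorem toEuclideanLin_eigenvectorBasis (i : ι) :
    toEuclideanLin M (hM.eigenvectorBasis i) = hM.eigenvalues i • hM.eigenvectorBasis i := by
  ext1 j
  exact congrFun (hM.mulVec_eigenvectorBasis i) j

theorem inner_eigenvectorBasis_toEuclideanLin_pow (t : ℕ) (y : EuclideanSpace ℝ ι) (i : ι) :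
    ⟪hM.eigenvectorBasis i, toEuclideanLin (M ^ t) y⟫
      = hM.eigenvalues i ^ t * ⟪hM.eigenvectorBasis i, y⟫ := by
  induction t with
  | zero => simp
  | succ t ih =>
    rw [pow_succ', toLpLin_mul_same, LinearMap.comp_apply,
      ← (isSymmetric_toEuclideanLin_iff.2 hM), toEuclideanLin_eigenvectorBasis, inner_smul_left,
      ih, pow_succ']
    simp [mul_assoc]

theorem norm_sq_toEuclideanLin_pow (t : ℕ) (y : EuclideanSpace ℝ ι) :
    ‖toEuclideanLin (M ^ t) y‖ ^ 2
      = ∑ i, hM.eigenvalues i ^ (2 * t) * ⟪hM.eigenvectorBasis i, y⟫ ^ 2 := by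
  simp only [← hM.eigenvectorBasis.sum_sq_inner_right, inner_eigenvectorBasis_toEuclideanLin_pow,
    mul_pow, pow_mul']

theorem norm_toEuclideanLin_pow_antitone (h : ∀ i, |hM.eigenvalues i| ≤ 1)
    (y : EuclideanSpace ℝ ι) : Antitone fun t => ‖toEuclideanLin (M ^ t) y‖ := by
  intro t t' htt
  rw [← sq_le_sq₀ (norm_nonneg _) (norm_nonneg _), hM.norm_sq_toEuclideanLin_pow,
    hM.norm_sq_toEuclideanLin_pow]
  refine sum_le_sum fun i _ => mul_le_mul_of_nonneg_right ?_ (sq_nonneg _)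
  simp only [pow_mul]
  exact pow_le_pow_of_le_one (sq_nonneg _) (sq_le_one_iff_abs_le_one _ |>.2 (h i)) htt

theorem sum_norm_sq_toEuclideanLin_pow_single (t : ℕ) :
    ∑ u, ‖toEuclideanLin (M ^ t) (EuclideanSpace.single u 1)‖ ^ 2
      = ∑ i, hM.eigenvalues i ^ (2 * t) := by
  simp only [hM.norm_sq_toEuclideanLin_pow, EuclideanSpace.inner_single_right]
  rw [sum_comm]
  refine sum_congr rfl fun i _ => ?_
  have hnorm := EuclideanSpace.real_norm_sq_eq (hM.eigenvectorBasis i)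
  rw [hM.eigenvectorBasis.orthonormal.1 i, one_pow] at hnorm
  simp [← mul_sum, ← hnorm]

/-- Otherwise the eigenvectors with eigenvalue above `c` would span a subspace meeting `ker L`. -/
theorem card_eigenvalues_gt_le {V : Type*} [AddCommGroup V] [Module ℝ V] [FiniteDimensional ℝ V]
    (L : EuclideanSpace ℝ ι →ₗ[ℝ] V) (c : ℝ)
    (h : ∀ x, L x = 0 → ⟪x, toEuclideanLin M x⟫ ≤ c * ‖x‖ ^ 2) :
    #{i | c < hM.eigenvalues i} ≤ Module.finrank ℝ V := by
  set I := ({i | c < hM.eigenvalues i} : Finset ι)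
  by_contra! hlt
  set b : I → EuclideanSpace ℝ ι := fun i => hM.eigenvectorBasis i
  have hb : Orthonormal ℝ b := hM.eigenvectorBasis.orthonormal.comp _ Subtype.val_injective
  set F := L ∘ₗ Fintype.linearCombination ℝ b
  obtain ⟨a, ha, hne⟩ := Submodule.exists_mem_ne_zero_of_ne_bot <|
    LinearMap.ker_ne_bot_of_finrank_lt (f := F)
      (by rwa [Module.finrank_fintype_fun_eq_card, Fintype.card_coe])
  set x := ∑ i, a i • b i
  have hx : L x = 0 := ha
  have hTx : toEuclideanLin M x = ∑ i : I, (hM.eigenvalues i * a i) • b i := by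
    simp only [x, map_sum, map_smul, b, toEuclideanLin_eigenvectorBasis, smul_smul, mul_comm]
  have hquad : ⟪x, toEuclideanLin M x⟫ = ∑ i : I, hM.eigenvalues i * a i ^ 2 := by
    rw [hTx, hb.inner_sum]
    simp only [conj_trivial]
    exact sum_congr rfl fun i _ => by ring
  have hnorm : ‖x‖ ^ 2 = ∑ i, a i ^ 2 := by
    rw [← real_inner_self_eq_norm_sq, hb.inner_sum]
    simp [sq]
  obtain ⟨j, hj⟩ := Function.ne_iff.1 hne
  have hlt' : c * ‖x‖ ^ 2 < ⟪x, toEuclideanLin M x⟫ := by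
    rw [hquad, hnorm, mul_sum]
    refine sum_lt_sum (fun i _ => ?_) ⟨j, mem_univ _, ?_⟩
    · exact mul_le_mul_of_nonneg_right (mem_filter.1 i.2).2.le (sq_nonneg _)
    · exact mul_lt_mul_of_pos_right (mem_filter.1 j.2).2 (sq_pos_of_ne_zero hj)
  exact (h x hx).not_gt hlt'

end Matrix.IsHermitian

section AdjPairs

variable {V : Type*} (G : SimpleGraph V)

/-- Every edge of `G[C]` appears here twice, once in each orientation. -/
noncomputable def adjPairs (C : Finset V) : Finset (V × V) := {p ∈ C ×ˢ C | G.Adj p.1 p.2}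

variable {G}

theorem mem_adjPairs {C : Finset V} {p : V × V} :
    p ∈ adjPairs G C ↔ p.1 ∈ C ∧ p.2 ∈ C ∧ G.Adj p.1 p.2 := by
  simp [adjPairs, and_assoc]

theorem sum_adjPairs_swap {β : Type*} [AddCommMonoid β] (C : Finset V) (f : V × V → β) :
    ∑ p ∈ adjPairs G C, f p.swap = ∑ p ∈ adjPairs G C, f p :=
  sum_nbij' Prod.swap Prod.swap
    (fun p hp => by
      obtain ⟨h1, h2, h⟩ := mem_adjPairs.1 hp
      exact mem_adjPairs.2 ⟨h2, h1, h.symm⟩)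
    (fun p hp => by
      obtain ⟨h1, h2, h⟩ := mem_adjPairs.1 hp
      exact mem_adjPairs.2 ⟨h2, h1, h.symm⟩)
    (fun _ _ => rfl) (fun _ _ => rfl) (fun _ _ => rfl)

theorem adjPairs_mono {C D : Finset V} (hCD : C ⊆ D) : adjPairs G C ⊆ adjPairs G D :=
  fun p hp => by
    obtain ⟨h1, h2, h⟩ := mem_adjPairs.1 hp
    exact mem_adjPairs.2 ⟨hCD h1, hCD h2, h⟩

theorem disjoint_adjPairs {C D : Finset V} (h : Disjoint C D) :
    Disjoint (adjPairs G C) (adjPairs G D) :=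
  disjoint_left.2 fun _ hC hD =>
    disjoint_left.1 h (mem_adjPairs.1 hC).1 (mem_adjPairs.1 hD).1

theorem sum_adjPairs_eq_sum_sum (C : Finset V) (F : V → V → ℝ) :
    ∑ p ∈ adjPairs G C, F p.1 p.2 = ∑ u ∈ C, ∑ v ∈ C, if G.Adj u v then F u v else 0 := by
  rw [adjPairs, sum_filter, sum_product]

theorem sum_adjPairs_le_sum_adjPairs_union [DecidableEq V] {C D : Finset V} (h : Disjoint C D)
    {f : V × V → ℝ} (hf : ∀ p, 0 ≤ f p) :
    ∑ p ∈ adjPairs G C, f p + ∑ p ∈ adjPairs G D, f p ≤ ∑ p ∈ adjPairs G (C ∪ D), f p := by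
  rw [← sum_union (disjoint_adjPairs h)]
  exact sum_le_sum_of_subset_of_nonneg
    (union_subset (adjPairs_mono subset_union_left) (adjPairs_mono subset_union_right))
    fun p _ _ => hf p

end AdjPairs

section BoundedDegree

variable {n d : ℕ} {G : SimpleGraph (Fin n)}

theorem sum_adjPairs_fst_le (hG : MaxDegreeLE G d) (C : Finset (Fin n)) {g : Fin n → ℝ}
    (hg : ∀ u, 0 ≤ g u) : ∑ p ∈ adjPairs G C, g p.1 ≤ d * ∑ u ∈ C, g u := by
  rw [sum_adjPairs_eq_sum_sum C fun u _ => g u, mul_sum]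
  refine sum_le_sum fun u _ => ?_
  have hdeg : (#{v ∈ C | G.Adj u v} : ℝ) ≤ d := by
    have : #{v ∈ C | G.Adj u v} ≤ (G.neighborSet u).ncard := by
      rw [← Set.ncard_coe_finset]
      exact Set.ncard_le_ncard fun v hv => (mem_filter.1 hv).2
    exact_mod_cast this.trans (hG u)
  calc ∑ v ∈ C, (if G.Adj u v then g u else 0) = #{v ∈ C | G.Adj u v} * g u := by
        rw [← sum_filter, sum_const, nsmul_eq_mul]
    _ ≤ d * g u := mul_le_mul_of_nonneg_right hdeg (hg u)

theorem sum_adjPairs_le_of_le_sq (hG : MaxDegreeLE G d) (C : Finset (Fin n))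
    (x : Fin n → ℝ) {f : Fin n × Fin n → ℝ} (hf : ∀ p, f p ≤ 2 * (x p.1 ^ 2 + x p.2 ^ 2)) :
    ∑ p ∈ adjPairs G C, f p ≤ 4 * d * ∑ u ∈ C, x u ^ 2 := by
  have hswap := sum_adjPairs_swap (G := G) C fun p => x p.1 ^ 2
  have hfst := sum_adjPairs_fst_le hG C fun u => sq_nonneg (x u)
  calc ∑ p ∈ adjPairs G C, f p ≤ ∑ p ∈ adjPairs G C, 2 * (x p.1 ^ 2 + x p.2 ^ 2) :=
        sum_le_sum fun p _ => hf p
    _ = 4 * ∑ p ∈ adjPairs G C, x p.1 ^ 2 := by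
        simp only [← mul_sum, sum_add_distrib, Prod.fst_swap] at hswap ⊢
        rw [hswap]; ring
    _ ≤ 4 * d * ∑ u ∈ C, x u ^ 2 := by linarith

end BoundedDegree

section Conductance

variable {n d : ℕ} {G : SimpleGraph (Fin n)} {C S : Finset (Fin n)} {φ : ℝ}

theorem cutEdgesIn_eq_card (hS : S ⊆ C) :
    cutEdgesIn G C S = #{p ∈ adjPairs G C | p.1 ∈ S ∧ p.2 ∉ S} := by
  rw [cutEdgesIn, ← Set.ncard_coe_finset]
  congr 1
  ext p
  simp only [Set.mem_ofPred_eq, coe_filter, mem_adjPairs]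
  exact ⟨fun ⟨h1, h2, h3, h⟩ => ⟨⟨hS h1, h2, h⟩, h1, h3⟩,
    fun ⟨⟨_, h2, h⟩, h1, h3⟩ => ⟨h1, h2, h3, h⟩⟩

theorem sum_adjPairs_abs_indicator_sub (hS : S ⊆ C) :
    ∑ p ∈ adjPairs G C, |(if p.1 ∈ S then (1 : ℝ) else 0) - (if p.2 ∈ S then 1 else 0)|
      = 2 * cutEdgesIn G C S := by
  have hpt : ∀ p : Fin n × Fin n,
      |(if p.1 ∈ S then (1 : ℝ) else 0) - (if p.2 ∈ S then 1 else 0)|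
        = (if p.1 ∈ S ∧ p.2 ∉ S then 1 else 0)
          + (if p.swap.1 ∈ S ∧ p.swap.2 ∉ S then 1 else 0) := by
    intro p
    by_cases h1 : p.1 ∈ S <;> by_cases h2 : p.2 ∈ S <;> simp [h1, h2]
  simp only [hpt, sum_add_distrib,
    sum_adjPairs_swap C fun p : Fin n × Fin n => if p.1 ∈ S ∧ p.2 ∉ S then (1 : ℝ) else 0]
  rw [sum_boole, cutEdgesIn_eq_card hS]
  ring

theorem InnerConductanceGE.mul_le_cutEdgesIn (h : InnerConductanceGE G d C φ) (hS : S ⊆ C)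
    (hne : S.Nonempty) (hcard : 2 * #S ≤ #C) : φ * (d * #S) ≤ cutEdgesIn G C S := by
  rcases (by positivity : (0 : ℝ) ≤ d * #S).eq_or_lt with h0 | hpos
  · rw [← h0, mul_zero]; positivity
  · exact (le_div_iff₀ hpos).1 (h S hS hne hcard)

theorem sum_adjPairs_abs_sub_eq_add_cutEdgesIn {g : Fin n → ℝ} {m : ℝ} (hSC : S ⊆ C)
    (hm : 0 ≤ m) (hlow : ∀ u ∈ C, min (g u) m = m * if u ∈ S then 1 else 0) :
    ∑ p ∈ adjPairs G C, |g p.1 - g p.2|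
      = ∑ p ∈ adjPairs G C, |max (g p.1) m - max (g p.2) m| + m * (2 * cutEdgesIn G C S) := by
  rw [← sum_adjPairs_abs_indicator_sub hSC, mul_sum, ← sum_add_distrib]
  refine sum_congr rfl fun p hp => ?_
  obtain ⟨h1, h2, -⟩ := mem_adjPairs.1 hp
  rw [abs_sub_eq_abs_max_sub_max_add_abs_min_sub_min _ _ m, hlow _ h1, hlow _ h2, ← mul_sub,
    abs_mul, abs_of_nonneg hm]

theorem sum_eq_sum_max_sub_add_mul_card {g : Fin n → ℝ} {m : ℝ} (hSC : S ⊆ C)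
    (hlow : ∀ u ∈ C, min (g u) m = m * if u ∈ S then 1 else 0) :
    ∑ u ∈ C, g u = ∑ u ∈ C, (max (g u) m - m) + m * #S :=
  calc ∑ u ∈ C, g u = ∑ u ∈ C, ((max (g u) m - m) + min (g u) m) :=
        sum_congr rfl fun u _ => by linarith [min_add_max (g u) m]
    _ = ∑ u ∈ C, (max (g u) m - m) + m * #S := by
        rw [sum_add_distrib, sum_congr rfl hlow, ← mul_sum, sum_ite_mem, inter_eq_right.2 hSC,
          sum_const, nsmul_one]

/-- A discrete co-area inequality: truncating `g` at its least positive value `m` removes the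
level set `{g ≠ 0}`, whose boundary costs `2 m · cut ≥ 2 φ d m · #{g ≠ 0}`. -/
theorem InnerConductanceGE.two_mul_sum_le_sum_adjPairs_abs (h : InnerConductanceGE G d C φ)
    {g : Fin n → ℝ} (hg : ∀ u, 0 ≤ g u) (hsupp : 2 * #{u ∈ C | g u ≠ 0} ≤ #C) :
    2 * (φ * d * ∑ u ∈ C, g u) ≤ ∑ p ∈ adjPairs G C, |g p.1 - g p.2| := by
  induction hk : #{u ∈ C | g u ≠ 0} using Nat.strong_induction_on generalizing g with
  | _ k ih =>
  set S := {u ∈ C | g u ≠ 0}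
  have hSC : S ⊆ C := filter_subset _ _
  rcases S.eq_empty_or_nonempty with hS | hS
  · have hzero : ∀ u ∈ C, g u = 0 := fun u hu => by
      by_contra hne
      exact (eq_empty_iff_forall_notMem.1 hS) u (mem_filter.2 ⟨hu, hne⟩)
    rw [sum_eq_zero hzero, mul_zero, mul_zero]
    positivity
  obtain ⟨a, haS, hmin⟩ := S.exists_min_image g hS
  set m := g a
  have hm : 0 < m := (hg a).lt_of_ne (Ne.symm (mem_filter.1 haS).2)
  have hlow : ∀ u ∈ C, min (g u) m = m * (if u ∈ S then 1 else 0) := fun u hu => by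
    by_cases huS : u ∈ S
    · simp [huS, hmin u huS]
    · have : g u = 0 := by_contra fun hne => huS (mem_filter.2 ⟨hu, hne⟩)
      simp [huS, this, hm.le]
  set g' : Fin n → ℝ := fun u => max (g u) m - m
  have hsupp' : {u ∈ C | g' u ≠ 0} ⊆ S.erase a := fun u hu => by
    obtain ⟨huC, hne⟩ := mem_filter.1 hu
    have hlt : m < g u := by
      by_contra hle
      exact hne (by simp [g', max_eq_right (not_lt.1 hle)])
    exact mem_erase.2 ⟨fun hua => hlt.ne (hua ▸ rfl), mem_filter.2 ⟨huC, (hm.trans hlt).ne'⟩⟩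
  have hcard' : #{u ∈ C | g' u ≠ 0} < k :=
    hk ▸ (card_le_card hsupp').trans_lt (card_erase_lt_of_mem haS)
  have hIH := ih _ hcard' (g := g') (fun u => sub_nonneg.2 (le_max_right _ _))
    (by have := card_le_card hsupp'; omega) rfl
  simp only [g', sub_sub_sub_cancel_right] at hIH
  have hcut := h.mul_le_cutEdgesIn hSC hS (hk ▸ hsupp)
  rw [sum_adjPairs_abs_sub_eq_add_cutEdgesIn hSC hm.le hlow,
    sum_eq_sum_max_sub_add_mul_card hSC hlow]
  nlinarith

theorem InnerConductanceGE.mul_sum_sq_le_of_nonneg (hG : MaxDegreeLE G d)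
    (h : InnerConductanceGE G d C φ) (hφ : 0 ≤ φ) {y : Fin n → ℝ} (hy : ∀ u, 0 ≤ y u)
    (hsupp : 2 * #{u ∈ C | y u ≠ 0} ≤ #C) :
    φ ^ 2 * d * ∑ u ∈ C, y u ^ 2 ≤ ∑ p ∈ adjPairs G C, (y p.1 - y p.2) ^ 2 := by
  set Q := ∑ u ∈ C, y u ^ 2
  set D := ∑ p ∈ adjPairs G C, (y p.1 - y p.2) ^ 2
  have hD : 0 ≤ D := by positivity
  have hsweep := h.two_mul_sum_le_sum_adjPairs_abs (g := fun u => y u ^ 2)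
    (fun u => sq_nonneg _) (by simpa only [ne_eq, pow_eq_zero_iff two_ne_zero] using hsupp)
  -- Cauchy–Schwarz after factoring `y u ^ 2 - y v ^ 2 = (y u - y v) * (y u + y v)`
  have hCS : (∑ p ∈ adjPairs G C, |y p.1 ^ 2 - y p.2 ^ 2|) ^ 2
      ≤ D * ∑ p ∈ adjPairs G C, (y p.1 + y p.2) ^ 2 := by
    have hfac : ∀ p : Fin n × Fin n,
        |y p.1 ^ 2 - y p.2 ^ 2| = |y p.1 - y p.2| * (y p.1 + y p.2) := fun p => by
      rw [sq_sub_sq, abs_mul, abs_of_nonneg (add_nonneg (hy p.1) (hy p.2)), mul_comm]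
    simp only [hfac, D, ← sq_abs (y _ - y _)]
    exact sum_mul_sq_le_sq_mul_sq _ _ _
  have hB : ∑ p ∈ adjPairs G C, (y p.1 + y p.2) ^ 2 ≤ 4 * d * Q :=
    sum_adjPairs_le_of_le_sq hG C y fun p => by nlinarith [sq_nonneg (y p.1 - y p.2)]
  rcases (by positivity : (0 : ℝ) ≤ d * Q).eq_or_lt with h0 | hpos
  · rw [mul_assoc, ← h0, mul_zero]; exact hD
  have hsq : (2 * (φ * d * Q)) ^ 2 ≤ D * (4 * d * Q) :=
    (pow_le_pow_left₀ (by positivity) hsweep 2).trans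
      (hCS.trans (mul_le_mul_of_nonneg_left hB hD))
  nlinarith

/-- Split `x` at a median of its values on `C`: each half is supported on at most half of `C`. -/
theorem InnerConductanceGE.mul_sum_sq_le (hG : MaxDegreeLE G d)
    (h : InnerConductanceGE G d C φ) (hφ : 0 ≤ φ) {x : Fin n → ℝ} (hx : ∑ u ∈ C, x u = 0) :
    φ ^ 2 * d * ∑ u ∈ C, x u ^ 2 ≤ ∑ p ∈ adjPairs G C, (x p.1 - x p.2) ^ 2 := by
  rcases C.eq_empty_or_nonempty with rfl | hC
  · simp [adjPairs]
  obtain ⟨m, hm₁, hm₂⟩ := C.exists_median hC x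
  set y : Fin n → ℝ := fun u => max (x u - m) 0
  set z : Fin n → ℝ := fun u => max (m - x u) 0
  have hpos : ∀ a : ℝ, max a 0 ≠ 0 → 0 < a := fun a ha => by
    by_contra hle
    exact ha (max_eq_right (not_lt.1 hle))
  have hy := h.mul_sum_sq_le_of_nonneg hG hφ (y := y) (fun u => le_max_right _ _) <|
    (Nat.mul_le_mul_left 2 <| card_le_card <| monotone_filter_right C
      fun _ _ hu => sub_pos.1 (hpos _ hu)).trans hm₁
  have hz := h.mul_sum_sq_le_of_nonneg hG hφ (y := z) (fun u => le_max_right _ _) <|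
    (Nat.mul_le_mul_left 2 <| card_le_card <| monotone_filter_right C
      fun _ _ hu => sub_pos.1 (hpos _ hu)).trans hm₂
  have hnorm : ∑ u ∈ C, x u ^ 2 ≤ ∑ u ∈ C, y u ^ 2 + ∑ u ∈ C, z u ^ 2 := by
    have hyz : ∀ u, y u ^ 2 + z u ^ 2 = x u ^ 2 - 2 * m * x u + m ^ 2 := fun u => by
      rcases le_total (x u) m with hu | hu <;>
        simp only [y, z, max_eq_left, max_eq_right, sub_nonneg, sub_nonpos, hu] <;> ring
    rw [← sum_add_distrib, sum_congr rfl fun u _ => hyz u, sum_add_distrib, sum_sub_distrib,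
      ← mul_sum, hx, sum_const]
    have : (0 : ℝ) ≤ #C • m ^ 2 := by positivity
    linarith
  have hsplit : ∑ p ∈ adjPairs G C, (y p.1 - y p.2) ^ 2 + ∑ p ∈ adjPairs G C, (z p.1 - z p.2) ^ 2
      ≤ ∑ p ∈ adjPairs G C, (x p.1 - x p.2) ^ 2 := by
    rw [← sum_add_distrib]
    exact sum_le_sum fun p _ => sq_max_sub_max_add_sq_max_sub_max_le _ _ m
  have hcoef : 0 ≤ φ ^ 2 * d := by positivity
  nlinarith [mul_le_mul_of_nonneg_left hnorm hcoef]

end Conductance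

section LazyWalk

variable {n : ℕ} (G : SimpleGraph (Fin n)) (d : ℕ)

theorem lazyWalk_eq_one_sub_smul_lapMatrix :
    lazyWalk G d = 1 - (2 * d : ℝ)⁻¹ • G.lapMatrix ℝ := by
  ext u v
  have hdeg : ((G.neighborSet u).ncard : ℝ) = G.degree u := by
    rw [← G.card_neighborSet_eq_degree, Set.ncard_eq_toFinset_card', Set.toFinset_card]
  by_cases huv : u = v
  · subst huv
    simp [lazyWalk, SimpleGraph.lapMatrix, SimpleGraph.degMatrix, hdeg, div_eq_inv_mul]
  · by_cases hadj : G.Adj u v <;>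
      simp [lazyWalk, SimpleGraph.lapMatrix, SimpleGraph.degMatrix, huv, hadj, one_apply_ne huv]

theorem lazyWalk_isHermitian : (lazyWalk G d).IsHermitian := by
  rw [lazyWalk_eq_one_sub_smul_lapMatrix]
  exact isHermitian_one.sub ((G.isHermitian_lapMatrix ℝ).smul (IsSelfAdjoint.all _))

theorem inner_toEuclideanLin_lazyWalk (x : EuclideanSpace ℝ (Fin n)) :
    ⟪x, toEuclideanLin (lazyWalk G d) x⟫
      = ‖x‖ ^ 2 - (∑ p ∈ adjPairs G univ, (x p.1 - x p.2) ^ 2) / (4 * d) := by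
  have hlap := G.lapMatrix_toLinearMap₂' ℝ x
  rw [toLinearMap₂'_apply', ← sum_adjPairs_eq_sum_sum] at hlap
  rw [EuclideanSpace.inner_eq_star_dotProduct, ofLp_toLpLin, lazyWalk_eq_one_sub_smul_lapMatrix,
    toLin'_apply, sub_mulVec, one_mulVec, smul_mulVec, star_trivial, dotProduct_comm,
    dotProduct_sub, dotProduct_smul, hlap, EuclideanSpace.real_norm_sq_eq]
  simp only [dotProduct, smul_eq_mul, sq]
  field_simp
  ring

variable {G d}

theorem lazyWalk_eigenvalues_mem_Icc (hG : MaxDegreeLE G d) (i : Fin n) :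
    (lazyWalk_isHermitian G d).eigenvalues i ∈ Set.Icc 0 1 := by
  set hM := lazyWalk_isHermitian G d
  set b := hM.eigenvectorBasis i
  have hb : ‖b‖ = 1 := hM.eigenvectorBasis.orthonormal.1 i
  have heig : ⟪b, toEuclideanLin (lazyWalk G d) b⟫ = hM.eigenvalues i := by
    rw [hM.toEuclideanLin_eigenvectorBasis, inner_smul_right, real_inner_self_eq_norm_sq, hb]
    ring
  have hE := sum_adjPairs_le_of_le_sq hG univ b (f := fun p => (b p.1 - b p.2) ^ 2)
    fun p => by nlinarith [sq_nonneg (b p.1 + b p.2)]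
  rw [← EuclideanSpace.real_norm_sq_eq, hb] at hE
  rw [← heig, inner_toEuclideanLin_lazyWalk, hb]
  have hE₀ : 0 ≤ ∑ p ∈ adjPairs G univ, (b p.1 - b p.2) ^ 2 := by positivity
  constructor
  · linarith [div_le_one_of_le₀ (a := ∑ p ∈ adjPairs G univ, (b p.1 - b p.2) ^ 2)
      (by linarith) (by positivity : (0 : ℝ) ≤ 4 * d)]
  · linarith [div_nonneg hE₀ (by positivity : (0 : ℝ) ≤ 4 * d)]

variable {φ : ℝ} {C₁ C₂ : Finset (Fin n)}

theorem inner_toEuclideanLin_lazyWalk_le (hd : 1 ≤ d) (hG : MaxDegreeLE G d) (hφ : 0 ≤ φ)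
    (hdisj : Disjoint C₁ C₂) (hunion : C₁ ∪ C₂ = univ) (h₁ : InnerConductanceGE G d C₁ φ)
    (h₂ : InnerConductanceGE G d C₂ φ) {x : EuclideanSpace ℝ (Fin n)}
    (hx₁ : ∑ u ∈ C₁, x u = 0) (hx₂ : ∑ u ∈ C₂, x u = 0) :
    ⟪x, toEuclideanLin (lazyWalk G d) x⟫ ≤ (1 - φ ^ 2 / 4) * ‖x‖ ^ 2 := by
  have hE : φ ^ 2 * d * ‖x‖ ^ 2 ≤ ∑ p ∈ adjPairs G univ, (x p.1 - x p.2) ^ 2 := by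
    rw [EuclideanSpace.real_norm_sq_eq, ← hunion, sum_union hdisj, mul_add]
    exact (add_le_add (h₁.mul_sum_sq_le hG hφ hx₁) (h₂.mul_sum_sq_le hG hφ hx₂)).trans
      (sum_adjPairs_le_sum_adjPairs_union hdisj fun p => sq_nonneg _)
  have hd₀ : (0 : ℝ) < 4 * d := mul_pos four_pos (Nat.cast_pos.2 hd)
  rw [inner_toEuclideanLin_lazyWalk, sub_le_iff_le_add, ← sub_le_iff_le_add', le_div_iff₀ hd₀]
  nlinarith

theorem card_lazyWalk_eigenvalues_gt_le_two (hd : 1 ≤ d) (hG : MaxDegreeLE G d) (hφ : 0 ≤ φ)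
    (hdisj : Disjoint C₁ C₂) (hunion : C₁ ∪ C₂ = univ) (h₁ : InnerConductanceGE G d C₁ φ)
    (h₂ : InnerConductanceGE G d C₂ φ) :
    #{i | 1 - φ ^ 2 / 4 < (lazyWalk_isHermitian G d).eigenvalues i} ≤ 2 := by
  let sumOn (C : Finset (Fin n)) : EuclideanSpace ℝ (Fin n) →ₗ[ℝ] ℝ :=
    ∑ u ∈ C, (EuclideanSpace.proj u : EuclideanSpace ℝ (Fin n) →L[ℝ] ℝ).toLinearMap
  have hrank : Module.finrank ℝ (ℝ × ℝ) = 2 := by simp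
  refine ((lazyWalk_isHermitian G d).card_eigenvalues_gt_le
    ((sumOn C₁).prod (sumOn C₂)) _ fun x hx => ?_).trans hrank.le
  simp only [LinearMap.prod_apply, LinearMap.coe_sum, ContinuousLinearMap.coe_coe,
    EuclideanSpace.coe_proj, Function.prod_apply, Finset.sum_apply, Prod.mk_eq_zero, sumOn] at hx
  exact inner_toEuclideanLin_lazyWalk_le hd hG hφ hdisj hunion h₁ h₂ hx.1 hx.2

end LazyWalk

section WalkDistribution

variable {n d : ℕ} {G : SimpleGraph (Fin n)}

theorem pvec_eq_toEuclideanLin (t : ℕ) (u : Fin n) :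
    pvec G d t u = toEuclideanLin (lazyWalk G d ^ t) (EuclideanSpace.single u 1) := by
  ext v
  simp only [pvec, ofLp_toLpLin, toLin'_apply]
  congr
  ext w
  simp

theorem sum_norm_sq_pvec (t : ℕ) :
    ∑ u, ‖pvec G d t u‖ ^ 2 = ∑ i, (lazyWalk_isHermitian G d).eigenvalues i ^ (2 * t) := by
  simp only [pvec_eq_toEuclideanLin]
  exact (lazyWalk_isHermitian G d).sum_norm_sq_toEuclideanLin_pow_single t

theorem norm_pvec_antitone (hG : MaxDegreeLE G d) (u : Fin n) :
    Antitone fun t => ‖pvec G d t u‖ := by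
  simp only [pvec_eq_toEuclideanLin]
  refine (lazyWalk_isHermitian G d).norm_toEuclideanLin_pow_antitone (fun i => ?_) _
  obtain ⟨h₀, h₁⟩ := lazyWalk_eigenvalues_mem_Icc hG i
  exact abs_le.2 ⟨by linarith, h₁⟩

/-- Past the mixing time `2 log n / φ²` only the (at most two) eigenvalues above `1 - φ²/4`
contribute to the trace of `M^{2t}`. -/
theorem sum_norm_sq_pvec_le_three (hd : 1 ≤ d) (hG : MaxDegreeLE G d) {φ : ℝ} (hφ₀ : 0 < φ)
    (hφ₁ : φ ≤ 1) {C₁ C₂ : Finset (Fin n)} (hdisj : Disjoint C₁ C₂) (hunion : C₁ ∪ C₂ = univ)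
    (h₁ : InnerConductanceGE G d C₁ φ) (h₂ : InnerConductanceGE G d C₂ φ) {t : ℕ}
    (ht : 2 * Real.log n / φ ^ 2 ≤ t) : ∑ u, ‖pvec G d t u‖ ^ 2 ≤ 3 := by
  have hφ2 : φ ^ 2 ≤ 1 := pow_le_one₀ hφ₀.le hφ₁
  have hcount := card_lazyWalk_eigenvalues_gt_le_two hd hG hφ₀.le hdisj hunion h₁ h₂
  have htail : n * (1 - φ ^ 2 / 4) ^ (2 * t) ≤ 1 := by
    refine natCast_mul_one_sub_pow_le_one n (by linarith) ?_
    rw [div_le_iff₀ (by positivity)] at ht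
    push_cast
    linarith
  rw [sum_norm_sq_pvec]
  refine (sum_pow_le_card_add_mul (lazyWalk_eigenvalues_mem_Icc hG) (c := 1 - φ ^ 2 / 4)
    (by linarith) _).trans ?_
  rw [Fintype.card_fin]
  have : (#{i | 1 - φ ^ 2 / 4 < (lazyWalk_isHermitian G d).eigenvalues i} : ℝ) ≤ 2 := by
    exact_mod_cast hcount
  linarith

end WalkDistribution

theorem Clusterable2.exists_cover {n d : ℕ} {G : SimpleGraph (Fin n)} {φ : ℝ}
    (h : Clusterable2 G d φ) :
    ∃ C₁ C₂ : Finset (Fin n), Disjoint C₁ C₂ ∧ C₁ ∪ C₂ = univ ∧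
      InnerConductanceGE G d C₁ φ ∧ InnerConductanceGE G d C₂ φ := by
  rcases h with h | ⟨C₁, C₂, -, -, hdisj, hunion, h₁, h₂⟩
  · refine ⟨univ, ∅, disjoint_empty_right _, union_empty _, h, fun S hS hne _ => ?_⟩
    exact absurd (subset_empty.1 hS ▸ hne) Finset.not_nonempty_empty
  · exact ⟨C₁, C₂, hdisj, hunion, h₁, h₂⟩

theorem stmt6 (d : ℕ) (hd : 1 ≤ d) :
    ∃ c : ℝ, 0 < c ∧ ∀ (γ : ℝ), 0 < γ → γ < 1 → ∀ (φ : ℝ), 0 < φ → φ ≤ 1 →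
      ∀ (n : ℕ) (G : SimpleGraph (Fin n)), MaxDegreeLE G d → Clusterable2 G d φ →
        ∃ V' : Finset (Fin n), (1 - γ) * n ≤ V'.card ∧
          ∀ u ∈ V', ∀ t : ℕ, c * Real.log n / φ ^ 2 < t →
            ‖pvec G d t u‖ ^ 2 ≤ 4 / (γ * n) := by
  refine ⟨2, two_pos, fun γ hγ _ φ hφ hφ₁ n G hG hclus => ?_⟩
  rcases n.eq_zero_or_pos with rfl | hn
  · exact ⟨∅, by simp, by simp⟩
  obtain ⟨C₁, C₂, hdisj, hunion, h₁, h₂⟩ := hclus.exists_cover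
  set t₀ := ⌊2 * Real.log n / φ ^ 2⌋₊ + 1
  have hsum := sum_norm_sq_pvec_le_three (t := t₀) hd hG hφ hφ₁ hdisj hunion h₁ h₂
    (by exact_mod_cast (Nat.lt_floor_add_one _).le)
  have hγn : 0 < γ * n := by positivity
  refine ⟨({u | ‖pvec G d t₀ u‖ ^ 2 ≤ 4 / (γ * n)} : Finset (Fin n)), ?_, fun u hu t ht => ?_⟩
  · have := card_sub_div_le_card_filter_le (fun u => sq_nonneg ‖pvec G d t₀ u‖)
      (a := 4 / (γ * n)) (by positivity) hsum
    rw [Fintype.card_fin, div_div_eq_mul_div] at this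
    have : 3 * (γ * n) / 4 ≤ γ * n := by linarith
    linarith
  · have ht₀ : t₀ ≤ t := Nat.floor_lt (by positivity) |>.2 ht
    exact (pow_le_pow_left₀ (norm_nonneg _) (norm_pvec_antitone hG u ht₀) 2).trans
      (mem_filter.1 hu).2
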